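/- Let X ⊆ ℝⁿ be nonempty and closed and let q(x) := ½·dist²(x; X) with the Euclidean distance. Then q is (Fréchet) differentiable at a point x ∈ ℝⁿ if and only if the Euclidean projection set proj_X(x) is a singleton, and in that case ∇q(x) = x − proj_X(x). -/

import Mathlib

/-!
Write `f := ½ dist²(·, X)`. Every nearest point `y` of `x` gives an upper support
`f ≤ ½‖· - y‖²` touching `f` at `x`, so if `f` is differentiable at `x` its gradient must be
`x - y`; hence all nearest points coincide. Conversely, comparing `f` at `z` with the same
upper support and, at `x`, with the support `½‖· - p‖²` coming from a nearest point `p` of `z`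
pins `f z - f x - ⟪x - y, z - x⟫` between `±(‖z - x‖ / 2 + ‖p - y‖) ‖z - x‖`. A compactness
argument shows that `p → y` as `z → x` when `y` is the unique nearest point, which gives the
gradient `x - y`.
-/

open Filter Topology Metric Set
open scoped RealInnerProductSpace

abbrev En (n : ℕ) := EuclideanSpace ℝ (Fin n)

/-- Euclidean projection set `proj_X(x) := {y ∈ X : ‖x − y‖ = dist(x;X)}`. -/
noncomputable def projSet {V : Type*} [NormedAddCommGroup V] [NormedSpace ℝ V]
    (X : Set V) (x : V) : Set V :=
  {y ∈ X | dist x y = Metric.infDist x X}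

lemma HasFDerivAt.eq_of_eventuallyLE_of_eq {F : Type*} [NormedAddCommGroup F] [NormedSpace ℝ F]
    {f g : F → ℝ} {f' g' : F →L[ℝ] ℝ} {x : F} (hf : HasFDerivAt f f' x)
    (hg : HasFDerivAt g g' x) (hle : f ≤ᶠ[𝓝 x] g) (heq : f x = g x) : f' = g' := by
  have hmin : IsLocalMin (fun z => g z - f z) x := by
    filter_upwards [hle] with z hz
    linarith
  exact (sub_eq_zero.1 (hmin.hasFDerivAt_eq_zero (hg.sub hf))).symm

lemma sq_infDist_le_norm_sub_sq {F : Type*} [SeminormedAddCommGroup F] {X : Set F} {y : F}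
    (hy : y ∈ X) (z : F) : infDist z X ^ 2 ≤ ‖z - y‖ ^ 2 := by
  gcongr
  · exact infDist_nonneg
  · rw [← dist_eq_norm]
    exact infDist_le_dist_of_mem hy

variable {E : Type*} [NormedAddCommGroup E] [InnerProductSpace ℝ E]

lemma hasGradientAt_half_norm_sub_sq [CompleteSpace E] (x y : E) :
    HasGradientAt (fun z => ‖z - y‖ ^ 2 / 2) (x - y) x := by
  have hfun : (fun z : E => ‖z - y‖ ^ 2 / 2) = fun z => 2⁻¹ * ‖z - y‖ ^ 2 := by
    ext z
    ring
  have hder : InnerProductSpace.toDual ℝ E (x - y) =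
      (2⁻¹ : ℝ) • (2 • innerSL ℝ (x - y)).comp (ContinuousLinearMap.id ℝ E) := by
    ext w
    simp
  rw [hasGradientAt_iff_hasFDerivAt, hfun, hder]
  exact ((hasFDerivAt_id x).sub_const y).norm_sq.const_mul _

variable {X : Set E} {x y : E}

lemma norm_sub_eq_infDist_of_mem_projSet (hy : y ∈ projSet X x) : ‖x - y‖ = infDist x X := by
  rw [← dist_eq_norm]
  exact hy.2

lemma projSet_nonempty [ProperSpace E] (hX : IsClosed X) (hne : X.Nonempty) (x : E) :
    (projSet X x).Nonempty := by
  obtain ⟨y, hyX, hy⟩ := hX.exists_infDist_eq_dist hne x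
  exact ⟨y, hyX, hy.symm⟩

lemma abs_half_sq_infDist_sub_inner_le {z p : E} (hy : y ∈ projSet X x) (hp : p ∈ projSet X z) :
    |infDist z X ^ 2 / 2 - infDist x X ^ 2 / 2 - ⟪x - y, z - x⟫| ≤
      (‖z - x‖ / 2 + ‖p - y‖) * ‖z - x‖ := by
  have hupper := sq_infDist_le_norm_sub_sq hy.1 z
  have hlower := sq_infDist_le_norm_sub_sq hp.1 x
  simp only [← norm_sub_eq_infDist_of_mem_projSet hy, ← norm_sub_eq_infDist_of_mem_projSet hp]
    at hupper hlower ⊢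
  have hexp_y : ‖z - y‖ ^ 2 = ‖z - x‖ ^ 2 + 2 * ⟪x - y, z - x⟫ + ‖x - y‖ ^ 2 := by
    rw [show z - y = (z - x) + (x - y) by abel, norm_add_sq_real, real_inner_comm]
  have hexp_p : ‖x - p‖ ^ 2 = ‖z - x‖ ^ 2 - 2 * ⟪z - p, z - x⟫ + ‖z - p‖ ^ 2 := by
    rw [show x - p = (z - p) - (z - x) by abel, norm_sub_sq_real, real_inner_comm]
    ring
  have hinner : ⟪z - p, z - x⟫ - ⟪x - y, z - x⟫ = ‖z - x‖ ^ 2 - ⟪p - y, z - x⟫ := by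
    rw [← inner_sub_left, show z - p - (x - y) = (z - x) - (p - y) by abel, inner_sub_left,
      real_inner_self_eq_norm_sq]
  have hcs := abs_real_inner_le_norm (p - y) (z - x)
  have hprod : 0 ≤ ‖p - y‖ * ‖z - x‖ := by positivity
  rw [abs_le] at hcs ⊢
  constructor <;> nlinarith

lemma eventually_projSet_subset_ball [ProperSpace E] (hX : IsClosed X) (hxy : projSet X x = {y})
    {ε : ℝ} (hε : 0 < ε) : ∀ᶠ z in 𝓝 x, projSet X z ⊆ ball y ε := by
  set d := infDist x X
  set K := (closedBall x (d + 1) ∩ X) \ ball y ε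
  have hK : IsCompact K :=
    (isCompact_closedBall x (d + 1)).inter_right hX |>.diff isOpen_ball
  have hfar : ∀ p ∈ K, d < dist x p := by
    rintro p ⟨⟨-, hpX⟩, hpy⟩
    refine (infDist_le_dist_of_mem hpX).lt_of_ne fun hp => hpy ?_
    have : p ∈ projSet X x := ⟨hpX, hp.symm⟩
    rw [hxy, mem_singleton_iff] at this
    exact this ▸ mem_ball_self hε
  obtain ⟨m, hdm, hm⟩ :=
    hK.exists_forall_le' (continuous_const.dist continuous_id).continuousOn hfar
  have hδ : 0 < min 1 (m - d) / 2 := by positivity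
  filter_upwards [ball_mem_nhds x hδ] with z hz p hp
  by_contra hpy
  have hzx : 2 * dist z x < min 1 (m - d) := by linarith [mem_ball.1 hz]
  have hxp : dist x p ≤ d + 2 * dist z x := by
    have := dist_triangle x z p
    rw [hp.2, dist_comm x z] at this
    linarith [infDist_le_infDist_add_dist (x := z) (y := x) (s := X)]
  have hpK : p ∈ K := ⟨⟨mem_closedBall'.2 (by linarith [min_le_left 1 (m - d)]), hp.1⟩, hpy⟩
  linarith [show m ≤ dist x p from hm p hpK, min_le_right 1 (m - d)]

lemma hasGradientAt_half_sq_infDist_of_projSet_eq_singleton [ProperSpace E] (hX : IsClosed X)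
    (hxy : projSet X x = {y}) : HasGradientAt (fun z => infDist z X ^ 2 / 2) (x - y) x := by
  have hy : y ∈ projSet X x := hxy ▸ rfl
  rw [hasGradientAt_iff_isLittleO, Asymptotics.isLittleO_iff]
  intro c hc
  filter_upwards [eventually_projSet_subset_ball hX hxy (half_pos hc), ball_mem_nhds x hc]
    with z hproj hz
  obtain ⟨p, hp⟩ := projSet_nonempty hX ⟨y, hy.1⟩ z
  have hpy : ‖p - y‖ < c / 2 := by rw [← dist_eq_norm]; exact hproj hp
  have hzx : ‖z - x‖ < c := by rw [← dist_eq_norm]; exact hz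
  calc ‖infDist z X ^ 2 / 2 - infDist x X ^ 2 / 2 - ⟪x - y, z - x⟫‖
      ≤ (‖z - x‖ / 2 + ‖p - y‖) * ‖z - x‖ := abs_half_sq_infDist_sub_inner_le hy hp
    _ ≤ c * ‖z - x‖ := by gcongr; linarith

lemma hasGradientAt_half_sq_infDist_of_mem_projSet [CompleteSpace E]
    (hd : DifferentiableAt ℝ (fun z => infDist z X ^ 2 / 2) x) (hy : y ∈ projSet X x) :
    HasGradientAt (fun z => infDist z X ^ 2 / 2) (x - y) x := by
  have hsupport : (fun z => infDist z X ^ 2 / 2) ≤ᶠ[𝓝 x] fun z => ‖z - y‖ ^ 2 / 2 :=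
    Eventually.of_forall fun z => by
      have := sq_infDist_le_norm_sub_sq hy.1 z
      dsimp only
      linarith
  have hgrad := hd.hasGradientAt
  have hdual := hgrad.hasFDerivAt.eq_of_eventuallyLE_of_eq
    (hasGradientAt_half_norm_sub_sq x y).hasFDerivAt hsupport
    (by rw [norm_sub_eq_infDist_of_mem_projSet hy])
  rwa [(InnerProductSpace.toDual ℝ E).injective hdual] at hgrad

lemma projSet_eq_singleton_of_differentiableAt [ProperSpace E] (hX : IsClosed X)
    (hne : X.Nonempty) (hd : DifferentiableAt ℝ (fun z => infDist z X ^ 2 / 2) x) :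
    ∃ y, projSet X x = {y} := by
  obtain ⟨y, hy⟩ := projSet_nonempty hX hne x
  refine ⟨y, (eq_singleton_iff_unique_mem).2 ⟨hy, fun p hp => ?_⟩⟩
  exact sub_right_injective ((hasGradientAt_half_sq_infDist_of_mem_projSet hd hp).unique
    (hasGradientAt_half_sq_infDist_of_mem_projSet hd hy))

/-- For a nonempty closed `X ⊆ ℝⁿ`, `q(x) = ½ dist²(x;X)` is (Fréchet) differentiable at `x`
iff `proj_X(x)` is a singleton, in which case `∇q(x) = x − proj_X(x)`. -/
theorem stmt4 {n : ℕ} (X : Set (En n)) (hX : IsClosed X) (hne : X.Nonempty) (x : En n) :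
    (DifferentiableAt ℝ (fun z => infDist z X ^ 2 / 2) x ↔ ∃ y, projSet X x = {y}) ∧
    (∀ y, projSet X x = {y} →
      HasGradientAt (fun z => infDist z X ^ 2 / 2) (x - y) x) := by
  have hgrad : ∀ y, projSet X x = {y} →
      HasGradientAt (fun z => infDist z X ^ 2 / 2) (x - y) x :=
    fun _ hy => hasGradientAt_half_sq_infDist_of_projSet_eq_singleton hX hy
  refine ⟨⟨projSet_eq_singleton_of_differentiableAt hX hne, ?_⟩, hgrad⟩
  rintro ⟨y, hy⟩
  exact (hgrad y hy).differentiableAt
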